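/- Let G be a port-numbered graph of diameter D and level of symmetry λ in which all vertices have pairwise distinct views. Then any two vertices u and v with V^{D+λ}(u) = V^{D+λ}(v) are equal; i.e., all views truncated at depth D+λ are already pairwise distinct. -/

import Mathlib

/-- A port-numbered graph on vertex type `V`: a finite connected simple graph in which,
at every vertex `v` of degree `deg v`, the incident edges are labeled by distinct port
numbers `0, …, deg v - 1`.  `next v i = some (u, j)` means that the edge with port
number `i` at `v` leads to the vertex `u`, at which it has port number `j`. -/
structure PortGraph (V : Type*) [Fintype V] where
  /-- the degree of each vertex -/
  deg : V → ℕ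
  /-- `next v i = some (u, j)` iff the edge with port `i` at `v` has `u` as its other
  endpoint, where it carries port number `j` -/
  next : V → ℕ → Option (V × ℕ)
  /-- exactly the ports `0, …, deg v - 1` are present at `v` -/
  next_isSome : ∀ v i, (next v i).isSome ↔ i < deg v
  /-- the port labeling is consistent at the two endpoints of every edge -/
  next_symm : ∀ v i u j, next v i = some (u, j) → next u j = some (v, i)
  /-- no self-loops -/
  next_ne : ∀ v i u j, next v i = some (u, j) → u ≠ v
  /-- no multiple edges: distinct ports at `v` lead to distinct neighbors -/
  next_inj : ∀ v i i' u j j', next v i = some (u, j) → next v i' = some (u, j') → i = i'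
  /-- the graph is connected -/
  connected : ∀ u v : V, Relation.ReflTransGen (fun a b => ∃ i j, next a i = some (b, j)) u v

namespace PortGraph

variable {V : Type*} [Fintype V]

/-- `P.viewEq t u v` means that the views of `u` and `v` truncated at depth `t` are equal:
`V^t(u) = V^t(v)`. -/
def viewEq (P : PortGraph V) : ℕ → V → V → Prop
  | 0, u, v => P.deg u = P.deg v
  | t + 1, u, v =>
      P.deg u = P.deg v ∧
        ∀ (i j j' : ℕ) (u' v' : V),
          P.next u i = some (u', j) → P.next v i = some (v', j') →
          j = j' ∧ viewEq P t u' v'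

/-- `P.ViewEq u v` means that the (infinite) views of `u` and `v` are equal:
`V(u) = V(v)`, i.e. `V^t(u) = V^t(v)` for every `t`. -/
def ViewEq (P : PortGraph V) (u v : V) : Prop := ∀ t, P.viewEq t u v

end PortGraph

namespace PortGraph

variable {V : Type*} [Fintype V]

/-- adjacency relation of a port-numbered graph -/
def Adj (P : PortGraph V) (a b : V) : Prop := ∃ i j, P.next a i = some (b, j)

/-- the underlying simple graph of a port-numbered graph -/
def toSimpleGraph (P : PortGraph V) : SimpleGraph V where
  Adj := P.Adj
  symm := by
    constructor
    rintro a b ⟨i, j, h⟩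
    exact ⟨j, i, P.next_symm a i b j h⟩
  loopless := by
    constructor
    rintro a ⟨i, j, h⟩
    exact P.next_ne a i a j h rfl

/-- `P.IsDiameter D` means that the diameter of `P` (the maximum distance between two
vertices) equals `D`. -/
def IsDiameter (P : PortGraph V) (D : ℕ) : Prop :=
  (∀ u v : V, P.toSimpleGraph.dist u v ≤ D) ∧ ∃ u v : V, P.toSimpleGraph.dist u v = D

end PortGraph

namespace PortGraph

variable {V : Type*} [Fintype V]

/-- `P.SymAt t` holds if there is a vertex `v` with
`{u : V^t(u) = V^t(v)} = {u : V(u) = V(v)}`.  The level of symmetry of `P` is the least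
such `t`. -/
def SymAt (P : PortGraph V) (t : ℕ) : Prop :=
  ∃ v : V, ∀ u : V, P.viewEq t u v ↔ P.ViewEq u v

end PortGraph

/-!
Let `w` be a vertex witnessing the level of symmetry `λ`, so that `V^λ(y) = V^λ(w)` already
forces `V(y) = V(w)`, hence `y = w` because views are pairwise distinct. Given
`V^{D+λ}(u) = V^{D+λ}(v)`, follow a shortest path from `u` to `w` (length at most `D`) and the
path with the same port sequence from `v`; it ends at a vertex `y` with `V^λ(y) = V^λ(w)`,
so `y = w`. Retracing both paths backwards along the same ports then gives `v = u`.
-/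

namespace PortGraph

variable {V : Type*} [Fintype V] (P : PortGraph V)

theorem viewEq_symm : ∀ {t : ℕ} {u v : V}, P.viewEq t u v → P.viewEq t v u
  | 0, _, _, h => h.symm
  | _ + 1, _, _, ⟨hdeg, h⟩ =>
    ⟨hdeg.symm, fun i j j' _ _ hv hu =>
      let ⟨hj, hvu⟩ := h i j' j _ _ hu hv
      ⟨hj.symm, viewEq_symm hvu⟩⟩

theorem viewEq_of_viewEq_succ : ∀ {t : ℕ} {u v : V}, P.viewEq (t + 1) u v → P.viewEq t u v
  | 0, _, _, h => h.1
  | _ + 1, _, _, ⟨hdeg, h⟩ =>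
    ⟨hdeg, fun i j j' _ _ hu hv =>
      let ⟨hj, huv⟩ := h i j j' _ _ hu hv
      ⟨hj, viewEq_of_viewEq_succ huv⟩⟩

theorem viewEq_antitone : Antitone P.viewEq :=
  antitone_nat_of_succ_le fun _ _ _ => P.viewEq_of_viewEq_succ

theorem eq_of_next_eq_some {a v b : V} {i j : ℕ} (ha : P.next a i = some (b, j))
    (hv : P.next v i = some (b, j)) : a = v := by
  have h := (P.next_symm a i b j ha).symm.trans (P.next_symm v i b j hv)
  simp only [Option.some.injEq, Prod.mk.injEq] at h
  exact h.1

theorem exists_next_of_viewEq_succ {t : ℕ} {a v b : V} {i j : ℕ} (h : P.viewEq (t + 1) a v)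
    (ha : P.next a i = some (b, j)) : ∃ b', P.next v i = some (b', j) ∧ P.viewEq t b b' := by
  have hi : i < P.deg v := h.1 ▸ (P.next_isSome a i).1 (by simp [ha])
  obtain ⟨⟨b', j'⟩, hv⟩ := Option.isSome_iff_exists.1 ((P.next_isSome v i).2 hi)
  obtain ⟨rfl, hbb'⟩ := h.2 i j j' b b' ha hv
  exact ⟨b', hv, hbb'⟩

theorem exists_viewEq_of_walk {u w : V} (p : P.toSimpleGraph.Walk u w) {t : ℕ} {v : V}
    (hp : p.length ≤ t) (h : P.viewEq t u v) :
    ∃ y, P.viewEq (t - p.length) w y ∧ (y = w → v = u) := by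
  induction p generalizing t v with
  | nil => exact ⟨v, h, fun hvw => hvw⟩
  | @cons a b c hab q ih =>
    rw [SimpleGraph.Walk.length_cons] at hp ⊢
    obtain ⟨t, rfl⟩ : ∃ s, t = s + 1 := ⟨t - 1, by omega⟩
    obtain ⟨i, j, ha⟩ := hab
    obtain ⟨b', hv, hbb'⟩ := P.exists_next_of_viewEq_succ h ha
    obtain ⟨y, hcy, hback⟩ := ih (by omega) hbb'
    refine ⟨y, by rwa [Nat.add_sub_add_right], fun hyc => ?_⟩
    obtain rfl := hback hyc
    exact (P.eq_of_next_eq_some ha hv).symm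

theorem exists_walk_length_le_of_isDiameter {D : ℕ} (hD : P.IsDiameter D) (u w : V) :
    ∃ p : P.toSimpleGraph.Walk u w, p.length ≤ D := by
  have hreach : P.toSimpleGraph.Reachable u w :=
    (SimpleGraph.reachable_iff_reflTransGen u w).2 (P.connected u w)
  obtain ⟨p, hp⟩ := hreach.exists_walk_length_eq_dist
  exact ⟨p, hp ▸ hD.1 u w⟩

end PortGraph

/-- Let `G` be a port-numbered graph of diameter `D` and level of symmetry `λ` in which
all vertices have pairwise distinct views.  Then any two vertices `u, v` with
`V^{D+λ}(u) = V^{D+λ}(v)` are equal: views truncated at depth `D + λ` are already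
pairwise distinct. -/
theorem viewEq_diam_add_levelOfSymmetry_inj {V : Type*} [Fintype V] (P : PortGraph V)
    (D lam : ℕ) (hD : P.IsDiameter D) (hlam : IsLeast {t : ℕ | P.SymAt t} lam)
    (hdistinct : ∀ u v : V, P.ViewEq u v → u = v) :
    ∀ u v : V, P.viewEq (D + lam) u v → u = v := by
  intro u v huv
  obtain ⟨w, hw⟩ := hlam.1
  obtain ⟨p, hpD⟩ := P.exists_walk_length_le_of_isDiameter hD u w
  obtain ⟨y, hwy, hback⟩ := P.exists_viewEq_of_walk p (by omega) huv
  have hyw : P.viewEq lam y w := P.viewEq_symm (P.viewEq_antitone (by omega) w y hwy)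
  exact (hback (hdistinct y w ((hw y).1 hyw))).symm
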